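/- arXiv:2010.16391 — 10 statements merged into one kernel-verified Lean document; each statement's English description precedes it below -/
import Mathlib

section
/- Let K be a pointed closed convex cone in a finite-dimensional real Euclidean space and let F be an extreme ray (one-dimensional face) of K. Then there exists κ > 0 such that d(p, F) ≤ κ · d(p, K) for all p in the linear span of F. -/
/-!
The span of the ray `F = ℝ≥0 v` is the line `ℝ v`. On its nonnegative half `d(p, F) = 0`; a point
`p = t v` with `t < 0` satisfies `d(p, F) ≤ ‖p‖ = |t| ‖v‖`, while scaling invariance of the cone
gives `d(p, K) = |t| d(-v, K)`, and `d(-v, K) > 0` because `K` is closed and pointed. Hence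
`κ = ‖v‖ / d(-v, K)` works.
-/

open Metric

theorem Submodule.span_setOf_nonneg_smul_eq {M : Type*} [AddCommMonoid M] [Module ℝ M] (v : M) :
    Submodule.span ℝ {p | ∃ t : ℝ, 0 ≤ t ∧ p = t • v} = ℝ ∙ v := by
  apply le_antisymm
  · rw [Submodule.span_le]
    rintro _ ⟨t, -, rfl⟩
    exact Submodule.smul_mem _ t (Submodule.mem_span_singleton_self v)
  · exact Submodule.span_mono (Set.singleton_subset_iff.2 ⟨1, zero_le_one, (one_smul ℝ v).symm⟩)

section Cone

open Pointwise

variable {E : Type*} [NormedAddCommGroup E] [NormedSpace ℝ E] {K : Set E}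

theorem smul_set_eq_self_of_cone (hK : ∀ c : ℝ, 0 ≤ c → ∀ x ∈ K, c • x ∈ K) {c : ℝ}
    (hc : 0 < c) : c • K = K := by
  refine (Set.smul_set_subset_iff.2 fun x hx => hK c hc.le x hx).antisymm fun x hx => ?_
  exact ⟨c⁻¹ • x, hK _ (inv_nonneg.2 hc.le) x hx, smul_inv_smul₀ hc.ne' x⟩

theorem infDist_smul_of_cone (hK : ∀ c : ℝ, 0 ≤ c → ∀ x ∈ K, c • x ∈ K) {c : ℝ}
    (hc : 0 < c) (x : E) : infDist (c • x) K = c * infDist x K := by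
  conv_lhs => rw [← smul_set_eq_self_of_cone hK hc]
  rw [infDist_smul₀ hc.ne', Real.norm_of_nonneg hc.le]

end Cone

theorem infDist_le_norm_of_zero_mem {E : Type*} [SeminormedAddCommGroup E] {s : Set E}
    (hs : (0 : E) ∈ s) (x : E) : infDist x s ≤ ‖x‖ :=
  dist_zero_right x ▸ infDist_le_dist_of_mem hs

theorem extreme_ray_amenable_general {E : Type*} [NormedAddCommGroup E] [InnerProductSpace ℝ E]
    (K : Set E)
    (hKcl : IsClosed K)
    (hKcone : ∀ (c : ℝ), 0 ≤ c → ∀ x ∈ K, c • x ∈ K)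
    (hpointed : K ∩ (-K) ⊆ {0})
    (v : E) (hv : v ≠ 0)
    (F : Set E) (hF : F = {p | ∃ t : ℝ, 0 ≤ t ∧ p = t • v})
    (hFK : F ⊆ K) :
    ∃ κ : ℝ, 0 < κ ∧ ∀ p : E, p ∈ Submodule.span ℝ F →
      Metric.infDist p F ≤ κ * Metric.infDist p K := by
  have h0F : (0 : E) ∈ F := hF ▸ ⟨0, le_rfl, (zero_smul ℝ v).symm⟩
  have hvK : v ∈ K := hFK (hF ▸ ⟨1, zero_le_one, (one_smul ℝ v).symm⟩)
  have hδ : 0 < infDist (-v) K :=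
    (hKcl.notMem_iff_infDist_pos ⟨0, hFK h0F⟩).1 fun h => hv (hpointed ⟨hvK, by simpa using h⟩)
  refine ⟨‖v‖ / infDist (-v) K, by positivity, fun p hp => ?_⟩
  rw [hF, Submodule.span_setOf_nonneg_smul_eq, Submodule.mem_span_singleton] at hp
  obtain ⟨t, rfl⟩ := hp
  rcases le_or_gt 0 t with ht | ht
  · rw [infDist_zero_of_mem (hF ▸ ⟨t, ht, rfl⟩)]
    exact mul_nonneg (by positivity) infDist_nonneg
  · calc infDist (t • v) F ≤ ‖t • v‖ := infDist_le_norm_of_zero_mem h0F _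
      _ = ‖v‖ / infDist (-v) K * (-t * infDist (-v) K) := by
        rw [norm_smul, Real.norm_of_nonpos ht.le]
        field_simp
      _ = ‖v‖ / infDist (-v) K * infDist (t • v) K := by
        rw [← infDist_smul_of_cone hKcone (neg_pos.2 ht), neg_smul_neg]

theorem extreme_ray_amenable {E : Type*} [NormedAddCommGroup E] [InnerProductSpace ℝ E]
    [FiniteDimensional ℝ E] (K : Set E)
    (hKcl : IsClosed K) (hKcv : Convex ℝ K)
    (hKcone : ∀ (c : ℝ), 0 ≤ c → ∀ x ∈ K, c • x ∈ K)
    (hpointed : K ∩ (-K) ⊆ {0})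
    (v : E) (hv : v ≠ 0)
    (F : Set E) (hF : F = {p | ∃ t : ℝ, 0 ≤ t ∧ p = t • v})
    (hFK : F ⊆ K)
    (hface : ∀ x y, x ∈ K → y ∈ K → x + y ∈ F → x ∈ F ∧ y ∈ F) :
    ∃ κ : ℝ, 0 < κ ∧ ∀ p : E, p ∈ Submodule.span ℝ F →
      Metric.infDist p F ≤ κ * Metric.infDist p K :=
  extreme_ray_amenable_general K hKcl hKcone hpointed v hv F hF hFK
end

section
/- Let z = (z_x, z_y, z_z) ∈ K_exp* with z_x < 0 and z_z·e = −z_x·e^{z_y/z_x}, and set β = z_y/z_x. Then K_exp ∩ {z}⊥ = {((1−β)y, y, e^{1−β}y) : y ≥ 0}; i.e., the face of the exponential cone exposed by z is the ray generated by (1−β, 1, e^{1−β}). -/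
/-!
The hypothesis on `z` makes it a positive multiple of `(1, β, -e^{β-1})`, so `q ⊥ z` reads
`e^{β-1} q₂ = q₀ + β q₁`. If `q₁ > 0` and `q₂ ≥ q₁ e^{q₀/q₁}`, the gap `e^{β-1} q₂ - q₀ - β q₁` is at
least `q₁ (e^s - s - 1)` with `s = q₀/q₁ + β - 1`, and `e^s ≥ 1 + s` is strict unless `s = 0`; this pins
`q` to the ray through `(1-β, 1, e^{1-β})`. On the boundary piece `q₁ = 0` both remaining terms have a
sign, so `q = 0`.
-/

def Kexp : Set (EuclideanSpace ℝ (Fin 3)) :=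
  {v | (0 < v 1 ∧ v 1 * Real.exp (v 0 / v 1) ≤ v 2) ∨ (v 0 ≤ 0 ∧ 0 ≤ v 2 ∧ v 1 = 0)}

open Real

lemma eq_of_mul_exp_div_le_of_exp_mul_eq {x y w β : ℝ} (hy : 0 < y)
    (hw : y * exp (x / y) ≤ w) (heq : exp (β - 1) * w = x + β * y) :
    x = (1 - β) * y ∧ w = exp (1 - β) * y := by
  set s := x / y + β - 1 with hs_def
  have hexp_s : y * exp s = exp (β - 1) * (y * exp (x / y)) := by
    rw [hs_def, add_sub_assoc, exp_add]; ring
  have hlin_s : y * (s + 1) = x + β * y := by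
    rw [hs_def]; field_simp; ring
  have hgap : y * (exp s - (s + 1)) ≤ 0 := by
    nlinarith [mul_le_mul_of_nonneg_left hw (exp_pos (β - 1)).le]
  have hs : s = 0 := by
    by_contra hs
    nlinarith [mul_pos hy (sub_pos.2 (add_one_lt_exp hs))]
  have hx : x = (1 - β) * y := by
    have : x / y = 1 - β := by linarith
    rw [← this, div_mul_cancel₀ x hy.ne']
  refine ⟨hx, ?_⟩
  have hinv : exp (1 - β) * exp (β - 1) = 1 := by rw [← exp_add]; simp
  calc w = exp (1 - β) * (exp (β - 1) * w) := by rw [← mul_assoc, hinv, one_mul]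
    _ = exp (1 - β) * y := by rw [heq, hx]; ring

lemma Kexp_inter_eq_ray (β : ℝ) :
    Kexp ∩ {q | exp (β - 1) * q 2 = q 0 + β * q 1} =
      {w | ∃ y : ℝ, 0 ≤ y ∧ w 0 = (1 - β) * y ∧ w 1 = y ∧ w 2 = exp (1 - β) * y} := by
  have hinv : exp (β - 1) * exp (1 - β) = 1 := by rw [← exp_add]; simp
  ext w
  simp only [Set.mem_inter_iff, Set.mem_ofPred_eq, Kexp]
  constructor
  · rintro ⟨⟨hw1, hw2⟩ | ⟨hw0, hw2, hw1⟩, heq⟩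
    · obtain ⟨hw0, hw2⟩ := eq_of_mul_exp_div_le_of_exp_mul_eq hw1 hw2 heq
      exact ⟨w 1, hw1.le, hw0, rfl, hw2⟩
    · have hw2' : w 2 = 0 := by
        rw [hw1] at heq; nlinarith [exp_pos (β - 1)]
      have hw0' : w 0 = 0 := by
        rw [hw1, hw2'] at heq; linarith
      exact ⟨0, le_rfl, by simp [hw0'], hw1, by simp [hw2']⟩
  · rintro ⟨y, hy, hw0, hw1, hw2⟩
    refine ⟨?_, by rw [hw0, hw1, hw2, ← mul_assoc, hinv]; ring⟩
    rcases hy.lt_or_eq with hy | rfl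
    · refine Or.inl ⟨hw1 ▸ hy, ?_⟩
      rw [hw0, hw1, hw2, mul_div_cancel_right₀ _ hy.ne', mul_comm]
    · exact Or.inr ⟨by simp [hw0], by simp [hw2], hw1⟩

theorem exposed_face_Fbeta_general (z : EuclideanSpace ℝ (Fin 3))
    (hzx : z 0 < 0)
    (hzz : z 2 * Real.exp 1 = -(z 0) * Real.exp (z 1 / z 0)) :
    Kexp ∩ {q | q 0 * z 0 + q 1 * z 1 + q 2 * z 2 = 0} =
      {w | ∃ y : ℝ, 0 ≤ y ∧ w 0 = (1 - z 1 / z 0) * y ∧ w 1 = y ∧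
        w 2 = Real.exp (1 - z 1 / z 0) * y} := by
  set β := z 1 / z 0
  have hz1 : z 1 = β * z 0 := (div_mul_cancel₀ _ hzx.ne).symm
  have hz2 : z 2 = -z 0 * exp (β - 1) := by
    rw [exp_sub, mul_div_assoc', eq_div_iff (exp_pos 1).ne', hzz]
  have hpairing (q : EuclideanSpace ℝ (Fin 3)) :
      q 0 * z 0 + q 1 * z 1 + q 2 * z 2 = z 0 * (q 0 + β * q 1 - exp (β - 1) * q 2) := by
    rw [hz1, hz2]; ring
  have horth : {q : EuclideanSpace ℝ (Fin 3) | q 0 * z 0 + q 1 * z 1 + q 2 * z 2 = 0} =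
      {q | exp (β - 1) * q 2 = q 0 + β * q 1} := by
    ext q
    rw [Set.mem_ofPred_eq, Set.mem_ofPred_eq, hpairing, mul_eq_zero, or_iff_right hzx.ne, sub_eq_zero,
      eq_comm]
  rw [horth, Kexp_inter_eq_ray]

theorem exposed_face_Fbeta (z : EuclideanSpace ℝ (Fin 3))
    (hzdual : ∀ v ∈ Kexp, 0 ≤ v 0 * z 0 + v 1 * z 1 + v 2 * z 2)
    (hzx : z 0 < 0)
    (hzz : z 2 * Real.exp 1 = -(z 0) * Real.exp (z 1 / z 0)) :
    Kexp ∩ {q | q 0 * z 0 + q 1 * z 1 + q 2 * z 2 = 0} =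
      {w | ∃ y : ℝ, 0 ≤ y ∧ w 0 = (1 - z 1 / z 0) * y ∧ w 1 = y ∧
        w 2 = Real.exp (1 - z 1 / z 0) * y} :=
  exposed_face_Fbeta_general z hzx hzz
end

section
/- Let z = (0, z_y, z_z) ∈ ℝ³ with z_y ≥ 0 and z_z > 0. Then {z}⊥ ∩ K_exp = {(x, 0, 0) : x ≤ 0}. -/
/-
The face {v 2 = 0} of Kexp is the ray F_∞, and Kexp lies in the orthant {v 1 ≥ 0, v 2 ≥ 0}.
Since z 0 = 0, z 1 ≥ 0 and z 2 > 0, orthogonality to z writes 0 as a sum of two nonnegative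
terms on Kexp, forcing v 2 = 0.
-/

namespace Kexp

variable {v : EuclideanSpace ℝ (Fin 3)}

lemma two_pos_of_one_pos (hv : v ∈ Kexp) (h1 : 0 < v 1) : 0 < v 2 := by
  rcases hv with ⟨-, hle⟩ | ⟨-, -, h1'⟩
  · exact (mul_pos h1 (Real.exp_pos _)).trans_le hle
  · exact absurd h1' h1.ne'

lemma one_nonneg (hv : v ∈ Kexp) : 0 ≤ v 1 := by
  rcases hv with ⟨h1, -⟩ | ⟨-, -, h1⟩
  · exact h1.le
  · exact h1.ge

lemma two_nonneg (hv : v ∈ Kexp) : 0 ≤ v 2 := by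
  rcases hv with hpos | ⟨-, h2, -⟩
  · exact (two_pos_of_one_pos (Or.inl hpos) hpos.1).le
  · exact h2

lemma zero_nonpos_and_one_eq_zero_of_two_eq_zero (hv : v ∈ Kexp) (h2 : v 2 = 0) :
    v 0 ≤ 0 ∧ v 1 = 0 := by
  have h1 : v 1 = 0 := by
    by_contra h1
    exact (two_pos_of_one_pos hv ((one_nonneg hv).lt_of_ne' h1)).ne' h2
  rcases hv with ⟨h1', -⟩ | ⟨h0, -, -⟩
  · exact absurd h1 h1'.ne'
  · exact ⟨h0, h1⟩

lemma mem_of_two_eq_zero (h0 : v 0 ≤ 0) (h1 : v 1 = 0) (h2 : v 2 = 0) : v ∈ Kexp :=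
  Or.inr ⟨h0, h2.ge, h1⟩

end Kexp

theorem exposed_face_Finfty (z : EuclideanSpace ℝ (Fin 3))
    (h0 : z 0 = 0) (hy : 0 ≤ z 1) (hz : 0 < z 2) :
    {q : EuclideanSpace ℝ (Fin 3) | q 0 * z 0 + q 1 * z 1 + q 2 * z 2 = 0} ∩ Kexp =
      {v | v 0 ≤ 0 ∧ v 1 = 0 ∧ v 2 = 0} := by
  ext q
  simp only [Set.mem_inter_iff, Set.mem_ofPred_eq, h0, mul_zero, zero_add]
  constructor
  · rintro ⟨horth, hK⟩
    have hq1z : 0 ≤ q 1 * z 1 := mul_nonneg (Kexp.one_nonneg hK) hy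
    have hq2z : 0 ≤ q 2 * z 2 := mul_nonneg (Kexp.two_nonneg hK) hz.le
    have hq2 : q 2 = 0 := by
      have : q 2 * z 2 = 0 := by linarith
      simpa [hz.ne'] using this
    obtain ⟨hq0, hq1⟩ := Kexp.zero_nonpos_and_one_eq_zero_of_two_eq_zero hK hq2
    exact ⟨hq0, hq1, hq2⟩
  · rintro ⟨hq0, hq1, hq2⟩
    exact ⟨by rw [hq1, hq2]; ring, Kexp.mem_of_two_eq_zero hq0 hq1 hq2⟩
end

section
/- Let z = (0, z_y, 0) with z_y > 0. Then {z}⊥ ∩ K_exp = {(x, 0, z) : x ≤ 0, z ≥ 0}, the unique two-dimensional face of the exponential cone. -/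
theorem setOf_coord_one_eq_zero_inter_Kexp :
    {v : EuclideanSpace ℝ (Fin 3) | v 1 = 0} ∩ Kexp = {v | v 0 ≤ 0 ∧ v 1 = 0 ∧ 0 ≤ v 2} := by
  ext v
  simp only [Set.mem_inter_iff, Set.mem_ofPred_eq, Kexp]
  constructor
  · rintro ⟨hv1, ⟨hpos, -⟩ | ⟨hv0, hv2, -⟩⟩
    · exact absurd hv1 hpos.ne'
    · exact ⟨hv0, hv1, hv2⟩
  · rintro ⟨hv0, hv1, hv2⟩
    exact ⟨hv1, Or.inr ⟨hv0, hv2, hv1⟩⟩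

theorem exposed_face_FnegInfty (z : EuclideanSpace ℝ (Fin 3))
    (h0 : z 0 = 0) (hy : 0 < z 1) (hz : z 2 = 0) :
    {q : EuclideanSpace ℝ (Fin 3) | q 0 * z 0 + q 1 * z 1 + q 2 * z 2 = 0} ∩ Kexp =
      {v | v 0 ≤ 0 ∧ v 1 = 0 ∧ 0 ≤ v 2} := by
  have hperp : {q : EuclideanSpace ℝ (Fin 3) | q 0 * z 0 + q 1 * z 1 + q 2 * z 2 = 0} =
      {v | v 1 = 0} := by
    ext q
    simp [h0, hz, hy.ne']
  rw [hperp, setOf_coord_one_eq_zero_inter_Kexp]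
end

section
/- Let z = (0,0,1) and F_∞ = {(x,0,0) : x ≤ 0}. For every α ∈ (0,1] and η > 0, the infimum of d(q, K_exp)^α / d(q, F_∞) over all q ∈ {z}⊥ with ‖q‖ ≤ η and q ∉ F_∞ equals 0. Consequently, no Hölderian error bound with any exponent α ∈ (0,1] holds for the pair ({z}⊥, K_exp) near the origin. -/
def Finf : Set (EuclideanSpace ℝ (Fin 3)) := {v | v 0 ≤ 0 ∧ v 1 = 0 ∧ v 2 = 0}

/-!
The witnesses are `q_t = (-η/2, t, 0)` for small `t > 0`. Every point of `F_∞` has vanishing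
second coordinate, so `d(q_t, F_∞) ≥ t`, while the point `(-η/2, t, t e^{-η/(2t)})` lies on the
boundary of `K_exp` straight above `q_t`, so `d(q_t, K_exp) ≤ t e^{-η/(2t)}`. Hence
`d(q_t, K_exp)^α / d(q_t, F_∞) ≤ t^{α-1} e^{-αη/(2t)} → 0` as `t → 0⁺`, for every `α > 0`.
-/

open Real Filter Metric Topology

lemma tendsto_rpow_mul_exp_neg_div_nhdsGT_zero (a : ℝ) {b : ℝ} (hb : 0 < b) :
    Tendsto (fun t : ℝ => t ^ a * exp (-b / t)) (𝓝[>] 0) (𝓝 0) := by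
  refine ((tendsto_rpow_mul_exp_neg_mul_atTop_nhds_zero (-a) b hb).comp
    tendsto_inv_nhdsGT_zero).congr' ?_
  filter_upwards [self_mem_nhdsWithin] with t (ht : 0 < t)
  simp [Function.comp, inv_rpow ht.le, rpow_neg ht.le, div_eq_mul_inv]

lemma eventually_rpow_mul_exp_neg_div_lt {α c ε : ℝ} (hα : 0 < α) (hc : 0 < c) (hε : 0 < ε) :
    ∀ᶠ t in 𝓝[>] 0, (t * exp (-c / t)) ^ α < ε * t := by
  filter_upwards [self_mem_nhdsWithin,
    (tendsto_rpow_mul_exp_neg_div_nhdsGT_zero (α - 1) (mul_pos hα hc)).eventually_lt_const hε]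
    with t (ht : 0 < t) hlt
  have hsplit : (t * exp (-c / t)) ^ α = t * (t ^ (α - 1) * exp (-(α * c) / t)) := by
    rw [mul_rpow ht.le (exp_pos _).le, ← exp_mul, rpow_sub_one ht.ne']
    field_simp
  rw [hsplit, mul_comm ε]
  exact mul_lt_mul_of_pos_left hlt ht

lemma abs_apply_one_le_infDist_Finf (q : EuclideanSpace ℝ (Fin 3)) :
    |q 1| ≤ infDist q Finf := by
  refine (le_infDist (s := Finf) ⟨0, le_rfl, rfl, rfl⟩).2 fun y hy => ?_
  simpa [hy.2.1, Real.dist_eq] using PiLp.dist_apply_le q y 1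

lemma infDist_Kexp_le {x t : ℝ} (ht : 0 < t) :
    infDist !₂[x, t, 0] Kexp ≤ t * exp (x / t) := by
  have hmem : !₂[x, t, t * exp (x / t)] ∈ Kexp := Or.inl ⟨ht, by simp⟩
  refine (infDist_le_dist_of_mem hmem).trans_eq ?_
  rw [EuclideanSpace.dist_eq, Fin.sum_univ_three]
  simp [Real.dist_eq, abs_of_pos ht, sqrt_sq (mul_pos ht (exp_pos _)).le]

lemma exists_infDist_Kexp_rpow_lt {α η ε : ℝ} (hα : 0 < α) (hη : 0 < η) (hε : 0 < ε) :
    ∃ q : EuclideanSpace ℝ (Fin 3), q 2 = 0 ∧ ‖q‖ ≤ η ∧ q ∉ Finf ∧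
      infDist q Kexp ^ α < ε * infDist q Finf := by
  obtain ⟨t, hlt, ht, htη⟩ := ((eventually_rpow_mul_exp_neg_div_lt hα (half_pos hη) hε).and
    (Ioc_mem_nhdsGT (half_pos hη))).exists
  refine ⟨!₂[-(η / 2), t, 0], rfl, ?_, fun h => ht.ne' h.2.1, ?_⟩
  · rw [EuclideanSpace.norm_eq, Fin.sum_univ_three]
    refine sqrt_le_iff.2 ⟨hη.le, ?_⟩
    simp only [Matrix.cons_val_zero, Matrix.cons_val_one, Matrix.cons_val, norm_eq_abs, sq_abs]
    nlinarith
  · calc infDist !₂[-(η / 2), t, 0] Kexp ^ α ≤ (t * exp (-(η / 2) / t)) ^ α :=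
          rpow_le_rpow infDist_nonneg (infDist_Kexp_le ht) hα.le
      _ < ε * t := hlt
      _ ≤ ε * infDist !₂[-(η / 2), t, 0] Finf := by
          gcongr
          simpa [abs_of_pos ht] using abs_apply_one_le_infDist_Finf !₂[-(η / 2), t, 0]

theorem no_holderian_error_bound_general (α η : ℝ) (hα : 0 < α) (hη : 0 < η) :
    sInf {r : ℝ | ∃ q : EuclideanSpace ℝ (Fin 3), q 2 = 0 ∧ ‖q‖ ≤ η ∧ q ∉ Finf ∧
        r = Metric.infDist q Kexp ^ α / Metric.infDist q Finf} = 0 ∧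
    ¬∃ κ : ℝ, 0 < κ ∧ ∀ q : EuclideanSpace ℝ (Fin 3), q 2 = 0 → ‖q‖ ≤ η →
        Metric.infDist q Finf ≤ κ * Metric.infDist q Kexp ^ α := by
  have ratio_lt : ∀ ε > 0, ∃ q : EuclideanSpace ℝ (Fin 3), q 2 = 0 ∧ ‖q‖ ≤ η ∧ q ∉ Finf ∧
      infDist q Kexp ^ α / infDist q Finf < ε := by
    intro ε hε
    obtain ⟨q, hq2, hqη, hqF, hlt⟩ := exists_infDist_Kexp_rpow_lt hα hη hε
    have hF : 0 < infDist q Finf :=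
      pos_of_mul_pos_right ((rpow_nonneg infDist_nonneg α).trans_lt hlt) hε.le
    exact ⟨q, hq2, hqη, hqF, (div_lt_iff₀ hF).2 hlt⟩
  constructor
  · obtain ⟨q, hq⟩ := ratio_lt 1 one_pos
    refine csInf_eq_of_forall_ge_of_forall_gt_exists_lt ⟨_, q, hq.1, hq.2.1, hq.2.2.1, rfl⟩ ?_ ?_
    · rintro r ⟨q, -, -, -, rfl⟩
      exact div_nonneg (rpow_nonneg infDist_nonneg α) infDist_nonneg
    · intro ε hε
      obtain ⟨q, hq2, hqη, hqF, hlt⟩ := ratio_lt ε hε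
      exact ⟨_, ⟨q, hq2, hqη, hqF, rfl⟩, hlt⟩
  · rintro ⟨κ, hκ, hbound⟩
    obtain ⟨q, hq2, hqη, -, hlt⟩ := exists_infDist_Kexp_rpow_lt hα hη (inv_pos.2 hκ)
    have hsmall : κ * infDist q Kexp ^ α < infDist q Finf := by
      simpa only [mul_inv_cancel_left₀ hκ.ne'] using mul_lt_mul_of_pos_left hlt hκ
    exact (hbound q hq2 hqη).not_gt hsmall

theorem no_holderian_error_bound (α η : ℝ) (hα : 0 < α) (hα1 : α ≤ 1) (hη : 0 < η) :
    sInf {r : ℝ | ∃ q : EuclideanSpace ℝ (Fin 3), q 2 = 0 ∧ ‖q‖ ≤ η ∧ q ∉ Finf ∧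
        r = Metric.infDist q Kexp ^ α / Metric.infDist q Finf} = 0 ∧
    ¬∃ κ : ℝ, 0 < κ ∧ ∀ q : EuclideanSpace ℝ (Fin 3), q 2 = 0 → ‖q‖ ≤ η →
        Metric.infDist q Finf ≤ κ * Metric.infDist q Kexp ^ α :=
  no_holderian_error_bound_general α η hα hη
end

section
/- Fix β ∈ ℝ, let h₁(ζ) = ζ + β − e^{β+ζ−1} and h₂(ζ) = (β e^{1−β} + e^{β−1})ζ − e^{1−β} − (1−β)e^{β−1} + (β²−β+1)e^ζ. Then lim_{ζ→1−β} |h₁(ζ)|^{1/2}/|h₂(ζ)| = 1/(√2·(e^{β−1} + (β²+1)e^{1−β})), and this limit is positive. In particular there exist C > 0 and ε > 0 such that |h₁(ζ)|^{1/2} ≥ C|h₂(ζ)| whenever |ζ − (1−β)| ≤ ε. -/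
/-! Put `t = ζ - (1 - β)`. Then `-h₁ ζ = eᵗ - 1 - t ~ t² / 2`, while `h₂` vanishes at `1 - β` with
derivative `D = e^{β-1} + (β² + 1) e^{1-β} > 0`, so `h₂ ζ ~ D t`. Dividing both by `|t|` gives the
limit `(1 / √2) / D`, and a ratio with positive limit is eventually bounded below. -/

open Real Filter Topology

lemma tendsto_exp_sub_one_sub_div_sq :
    Tendsto (fun x => (exp x - 1 - x) / x ^ 2) (𝓝[≠] 0) (𝓝 2⁻¹) := by
  have h := (exp_sub_sum_range_succ_isLittleO_pow 2).tendsto_div_nhds_zero.add_const 2⁻¹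
  rw [zero_add] at h
  refine (tendsto_nhdsWithin_of_tendsto_nhds h).congr' ?_
  filter_upwards [self_mem_nhdsWithin] with x (hx : x ≠ 0)
  simp only [Finset.sum_range_succ, Finset.sum_range_zero, Nat.factorial, Nat.cast_one]
  field_simp
  ring

lemma Filter.Tendsto.sqrt_div_abs {α : Type*} {l : Filter α} {f g : α → ℝ} {L : ℝ}
    (h : Tendsto (fun x => f x / g x ^ 2) l (𝓝 L)) :
    Tendsto (fun x => √(f x) / |g x|) l (𝓝 √L) := by
  refine (h.sqrt).congr fun x => ?_
  rw [sqrt_div' _ (sq_nonneg _), sqrt_sq_eq_abs]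

lemma tendsto_sub_nhdsNE (a : ℝ) : Tendsto (· - a) (𝓝[≠] a) (𝓝[≠] 0) := by
  have h := (Homeomorph.subRight a).map_punctured_nhds_eq a
  rw [Homeomorph.subRight_apply, sub_self] at h
  exact h.le

lemma tendsto_sqrt_exp_sub_one_sub_div_abs_sub (a : ℝ) :
    Tendsto (fun x => √(exp (x - a) - 1 - (x - a)) / |x - a|) (𝓝[≠] a) (𝓝 (1 / √2)) := by
  rw [one_div, ← sqrt_inv]
  exact (tendsto_exp_sub_one_sub_div_sq.comp (tendsto_sub_nhdsNE a)).sqrt_div_abs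

lemma HasDerivAt.tendsto_abs_div_abs_sub {f : ℝ → ℝ} {f' a : ℝ} (hf : HasDerivAt f f' a)
    (hfa : f a = 0) : Tendsto (fun x => |f x| / |x - a|) (𝓝[≠] a) (𝓝 |f'|) := by
  refine (hasDerivAt_iff_tendsto_slope.1 hf).abs.congr fun x => ?_
  rw [slope_def_field, hfa, sub_zero, abs_div]

lemma exists_mul_abs_le_of_tendsto_div {f g : ℝ → ℝ} {a L : ℝ}
    (h : Tendsto (fun x => f x / |g x|) (𝓝[≠] a) (𝓝 L)) (hL : 0 < L)
    (hfa : 0 ≤ f a) (hga : g a = 0) :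
    ∃ C ε : ℝ, 0 < C ∧ 0 < ε ∧ ∀ x, |x - a| ≤ ε → C * |g x| ≤ f x := by
  obtain ⟨ε, hε, hball⟩ := Metric.eventually_nhds_iff.1 <| eventually_nhdsWithin_iff.1 <|
    h.eventually (eventually_gt_nhds (half_lt_self hL))
  refine ⟨L / 2, ε / 2, half_pos hL, half_pos hε, fun x hx => ?_⟩
  rcases eq_or_ne x a with rfl | hxa
  · simpa [hga] using hfa
  have hlt := hball (by rw [Real.dist_eq]; linarith) hxa
  have hg : 0 < |g x| := by
    by_contra! h0
    rw [abs_nonpos_iff.1 h0, abs_zero, div_zero] at hlt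
    linarith
  exact ((lt_div_iff₀ hg).1 hlt).le

theorem h1_h2_ratio_limit (β : ℝ) (h₁ h₂ : ℝ → ℝ)
    (hh₁ : h₁ = fun ζ => ζ + β - Real.exp (β + ζ - 1))
    (hh₂ : h₂ = fun ζ => (β * Real.exp (1 - β) + Real.exp (β - 1)) * ζ -
      Real.exp (1 - β) - (1 - β) * Real.exp (β - 1) + (β ^ 2 - β + 1) * Real.exp ζ) :
    Filter.Tendsto (fun ζ => Real.sqrt |h₁ ζ| / |h₂ ζ|) (nhdsWithin (1 - β) {1 - β}ᶜ)
      (nhds (1 / (Real.sqrt 2 * (Real.exp (β - 1) + (β ^ 2 + 1) * Real.exp (1 - β))))) ∧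
    0 < 1 / (Real.sqrt 2 * (Real.exp (β - 1) + (β ^ 2 + 1) * Real.exp (1 - β))) ∧
    ∃ C ε : ℝ, 0 < C ∧ 0 < ε ∧ ∀ ζ : ℝ, |ζ - (1 - β)| ≤ ε →
      C * |h₂ ζ| ≤ Real.sqrt |h₁ ζ| := by
  set D := exp (β - 1) + (β ^ 2 + 1) * exp (1 - β) with hD_def
  have hD : 0 < D := by positivity
  have habs_h₁ : ∀ ζ, |h₁ ζ| = exp (ζ - (1 - β)) - 1 - (ζ - (1 - β)) := fun ζ => by
    have h : h₁ ζ = -(exp (ζ - (1 - β)) - 1 - (ζ - (1 - β))) := by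
      simp only [hh₁]
      rw [show β + ζ - 1 = ζ - (1 - β) by ring]
      ring
    rw [h, abs_neg, abs_of_nonneg (by linarith [add_one_le_exp (ζ - (1 - β))])]
  have hh₂a : h₂ (1 - β) = 0 := by
    simp only [hh₂]
    ring
  have hh₂' : HasDerivAt h₂ D (1 - β) := by
    subst hh₂
    refine ((((hasDerivAt_id' (1 - β)).const_mul (β * exp (1 - β) + exp (β - 1))).sub_const
      (exp (1 - β))).sub_const ((1 - β) * exp (β - 1))).add
      ((hasDerivAt_exp (1 - β)).const_mul (β ^ 2 - β + 1)) |>.congr_deriv ?_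
    rw [hD_def]
    ring
  have hlim : Tendsto (fun ζ => √|h₁ ζ| / |h₂ ζ|) (𝓝[≠] (1 - β)) (𝓝 (1 / (√2 * D))) := by
    have h := (tendsto_sqrt_exp_sub_one_sub_div_abs_sub (1 - β)).div
      (hh₂'.tendsto_abs_div_abs_sub hh₂a) (abs_ne_zero.2 hD.ne')
    rw [abs_of_pos hD, div_div] at h
    refine h.congr' ?_
    filter_upwards [self_mem_nhdsWithin] with ζ hζ
    rw [Pi.div_apply, habs_h₁, div_div_div_cancel_right₀ (abs_ne_zero.2 (sub_ne_zero.2 hζ))]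
  exact ⟨hlim, by positivity,
    exists_mul_abs_le_of_tendsto_div hlim (by positivity) (sqrt_nonneg _) hh₂a⟩
end

section
/- Fix β ∈ ℝ and define G(ζ) = |ζ + β − e^{β+ζ−1}| / √(ζ² + 1 + e^{2ζ}). Then G is continuous, G(ζ) = 0 if and only if ζ = 1−β, lim_{ζ→∞} G(ζ) = e^{β−1}, and lim_{ζ→−∞} G(ζ) = 1. Consequently, for every ε > 0 the infimum of G over {ζ : |ζ + β − 1| ≥ ε} is strictly positive. -/
/-!
Write `G = |u| / √v` with `u ζ = ζ + β - e^{β+ζ-1}` and `v ζ = ζ² + 1 + e^{2ζ}`. Since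
`e^t ≥ t + 1` with equality only at `t = 0`, `u` vanishes exactly at `ζ = 1 - β`. Both limits
come from rescaling: `|u| / √v = |u / s| / √(v / s²)` for any `s > 0`, and with `s = e^ζ`
at `+∞`, `s = -ζ` at `-∞`, the rescaled numerator and denominator have finite limits.
Finally, a continuous function with positive limits at `±∞` is bounded away from `0` on any
closed set where it is positive: truncating it at a level below both limits gives a function that
attains its minimum there.
-/

open Real Filter Topology Set

lemma sInf_image_pos_of_tendsto_atBot_atTop {f : ℝ → ℝ} (hf : Continuous f) {a b : ℝ}
    (ha : 0 < a) (hb : 0 < b) (hbot : Tendsto f atBot (𝓝 a)) (htop : Tendsto f atTop (𝓝 b))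
    {s : Set ℝ} (hs : IsClosed s) (hs₀ : s.Nonempty) (hpos : ∀ x ∈ s, 0 < f x) :
    0 < sInf (f '' s) := by
  obtain ⟨x₀, hx₀⟩ := hs₀
  obtain ⟨c, hc, hca, hcb⟩ : ∃ c, 0 < c ∧ c < a ∧ c < b :=
    ⟨min a b / 2, by positivity, by linarith [min_le_left a b, lt_min ha hb],
      by linarith [min_le_right a b, lt_min ha hb]⟩
  have hlarge : ∀ᶠ x in cocompact ℝ, c ≤ f x := by
    rw [cocompact_eq_atBot_atTop, eventually_sup]
    exact ⟨hbot.eventually (eventually_ge_nhds hca), htop.eventually (eventually_ge_nhds hcb)⟩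
  obtain ⟨x, hx, hmin⟩ := ((hf.min continuous_const).continuousOn (s := s)).exists_isMinOn' hs
    hx₀ ((hlarge.filter_mono inf_le_left).mono fun y hy =>
      (min_le_right _ _).trans_eq (min_eq_right hy).symm)
  refine (lt_min (hpos x hx) hc).trans_le (le_csInf ⟨f x₀, x₀, hx₀, rfl⟩ ?_)
  rintro _ ⟨y, hy, rfl⟩
  exact (hmin hy).trans (min_le_left _ _)

lemma tendsto_abs_div_sqrt_of_rescale {α : Type*} {l : Filter α} {u v s : α → ℝ} {a : ℝ}
    (hs : ∀ᶠ x in l, 0 < s x) (hu : Tendsto (fun x => u x / s x) l (𝓝 a))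
    (hv : Tendsto (fun x => v x / s x ^ 2) l (𝓝 1)) :
    Tendsto (fun x => |u x| / √(v x)) l (𝓝 |a|) := by
  have hlim : Tendsto (fun x => |u x / s x| / √(v x / s x ^ 2)) l (𝓝 (|a| / √1)) :=
    hu.abs.div hv.sqrt (by simp)
  rw [sqrt_one, div_one] at hlim
  refine hlim.congr' (hs.mono fun x hx => ?_)
  rw [abs_div, abs_of_pos hx, sqrt_div' _ (by positivity), sqrt_sq hx.le,
    div_div_div_cancel_right₀ hx.ne']

lemma add_one_eq_exp_iff {x : ℝ} : x + 1 = exp x ↔ x = 0 := by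
  refine ⟨fun h => by_contra fun hx => (add_one_lt_exp hx).ne h, ?_⟩
  rintro rfl
  simp

noncomputable def expConeFaceRatio (β ζ : ℝ) : ℝ :=
  |ζ + β - exp (β + ζ - 1)| / √(ζ ^ 2 + 1 + exp (2 * ζ))

namespace expConeFaceRatio

variable (β : ℝ)

lemma sqrt_denom_pos (ζ : ℝ) : 0 < √(ζ ^ 2 + 1 + exp (2 * ζ)) := by
  positivity

lemma continuous : Continuous (expConeFaceRatio β) :=
  Continuous.div (by fun_prop) (by fun_prop) fun ζ => (sqrt_denom_pos ζ).ne'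

lemma eq_zero_iff (ζ : ℝ) : expConeFaceRatio β ζ = 0 ↔ ζ = 1 - β := by
  rw [expConeFaceRatio, div_eq_zero_iff, or_iff_left (sqrt_denom_pos ζ).ne', abs_eq_zero,
    sub_eq_zero, show ζ + β = (β + ζ - 1) + 1 by ring, add_one_eq_exp_iff]
  constructor <;> intro h <;> linarith

lemma pos_of_ne {ζ : ℝ} (hζ : ζ ≠ 1 - β) : 0 < expConeFaceRatio β ζ :=
  (div_nonneg (abs_nonneg _) (sqrt_nonneg _)).lt_of_ne' (mt (eq_zero_iff β ζ).1 hζ)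

lemma tendsto_atTop : Tendsto (expConeFaceRatio β) atTop (𝓝 (exp (β - 1))) := by
  have h₀ := tendsto_pow_mul_exp_neg_atTop_nhds_zero 0
  have h₁ := tendsto_pow_mul_exp_neg_atTop_nhds_zero 1
  simp only [pow_zero, one_mul, pow_one] at h₀ h₁
  have hu : Tendsto (fun ζ => (ζ + β - exp (β + ζ - 1)) / exp ζ) atTop (𝓝 (-exp (β - 1))) := by
    have := (h₁.add (h₀.const_mul β)).sub_const (exp (β - 1))
    rw [mul_zero, add_zero, zero_sub] at this
    refine this.congr fun ζ => ?_
    rw [show β + ζ - 1 = (β - 1) + ζ by ring, exp_add, exp_neg]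
    field_simp
  have hv : Tendsto (fun ζ => (ζ ^ 2 + 1 + exp (2 * ζ)) / exp ζ ^ 2) atTop (𝓝 1) := by
    have := ((h₁.pow 2).add (h₀.pow 2)).add_const 1
    rw [zero_pow two_ne_zero, add_zero, zero_add] at this
    refine this.congr fun ζ => ?_
    rw [exp_neg, two_mul, exp_add]
    field_simp
  have := tendsto_abs_div_sqrt_of_rescale (Eventually.of_forall exp_pos) hu hv
  rwa [abs_neg, abs_of_pos (exp_pos _)] at this

lemma tendsto_atBot : Tendsto (expConeFaceRatio β) atBot (𝓝 1) := by
  have hinv : Tendsto (fun ζ : ℝ => ζ⁻¹) atBot (𝓝 0) := tendsto_inv_atBot_zero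
  have hexp₁ : Tendsto (fun ζ => exp (β + ζ - 1)) atBot (𝓝 0) :=
    tendsto_exp_atBot.comp
      (tendsto_atBot_add_const_right _ _ (tendsto_atBot_add_const_left _ β tendsto_id))
  have hexp₂ : Tendsto (fun ζ : ℝ => exp (2 * ζ)) atBot (𝓝 0) :=
    tendsto_exp_atBot.comp (tendsto_id.const_mul_atBot two_pos)
  have hneg : ∀ᶠ ζ : ℝ in atBot, ζ < 0 := eventually_lt_atBot 0
  have hu : Tendsto (fun ζ => (ζ + β - exp (β + ζ - 1)) / -ζ) atBot (𝓝 (-1)) := by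
    have := ((hinv.const_mul β).sub (hexp₁.mul hinv)).const_sub (-1)
    rw [mul_zero, zero_mul, sub_zero, sub_zero] at this
    refine this.congr' (hneg.mono fun ζ hζ => ?_)
    field_simp [hζ.ne]
    ring
  have hv : Tendsto (fun ζ => (ζ ^ 2 + 1 + exp (2 * ζ)) / (-ζ) ^ 2) atBot (𝓝 1) := by
    have := ((hinv.pow 2).add (hexp₂.mul (hinv.pow 2))).const_add 1
    rw [zero_pow two_ne_zero, zero_mul, add_zero, add_zero] at this
    refine this.congr' (hneg.mono fun ζ hζ => ?_)
    field_simp [hζ.ne]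
    ring
  have := tendsto_abs_div_sqrt_of_rescale (hneg.mono fun ζ => neg_pos.2) hu hv
  rwa [abs_neg, abs_one] at this

end expConeFaceRatio

theorem G_properties (β : ℝ) (G : ℝ → ℝ)
    (hG : G = fun ζ => |ζ + β - Real.exp (β + ζ - 1)| /
      Real.sqrt (ζ ^ 2 + 1 + Real.exp (2 * ζ))) :
    Continuous G ∧
    (∀ ζ : ℝ, G ζ = 0 ↔ ζ = 1 - β) ∧
    Filter.Tendsto G Filter.atTop (nhds (Real.exp (β - 1))) ∧
    Filter.Tendsto G Filter.atBot (nhds 1) ∧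
    ∀ ε : ℝ, 0 < ε → 0 < sInf (G '' {ζ : ℝ | ε ≤ |ζ + β - 1|}) := by
  obtain rfl : G = expConeFaceRatio β := hG
  refine ⟨expConeFaceRatio.continuous β, expConeFaceRatio.eq_zero_iff β,
    expConeFaceRatio.tendsto_atTop β, expConeFaceRatio.tendsto_atBot β, fun ε hε => ?_⟩
  refine sInf_image_pos_of_tendsto_atBot_atTop (expConeFaceRatio.continuous β) one_pos
    (exp_pos _) (expConeFaceRatio.tendsto_atBot β) (expConeFaceRatio.tendsto_atTop β)
    (isClosed_le continuous_const (by fun_prop)) ⟨1 - β + ε, ?_⟩ fun ζ hζ => ?_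
  · rw [mem_ofPred_eq, show 1 - β + ε + β - 1 = ε by ring, abs_of_pos hε]
  · refine expConeFaceRatio.pos_of_ne β fun h => hε.not_ge ?_
    rwa [h, mem_ofPred_eq, show 1 - β + β - 1 = 0 by ring, abs_zero] at hζ
end

section
/- Let a > 0 and z = (0, a, 1). For every v = (v_x, v_y, v_y e^{v_x/v_y}) with v_x > 0 and v_y > 0, one has |⟨z, v⟩| = a v_y + v_y e^{v_x/v_y} ≥ a v_y + (1/2)v_y(1 + v_x/v_y) + (1/2)v_y e^{v_x/v_y} ≥ (1/2)(|v_x| + |v_y| + |v_y e^{v_x/v_y}|) = (1/2)‖v‖₁, using e^t ≥ 1 + t. -/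
theorem Finfty_lipschitz_estimate (a vx vy : ℝ) (ha : 0 < a) (hx : 0 < vx) (hy : 0 < vy) :
    |0 * vx + a * vy + 1 * (vy * Real.exp (vx / vy))| = a * vy + vy * Real.exp (vx / vy) ∧
    a * vy + vy * Real.exp (vx / vy) ≥
      a * vy + (1 / 2) * vy * (1 + vx / vy) + (1 / 2) * vy * Real.exp (vx / vy) ∧
    a * vy + (1 / 2) * vy * (1 + vx / vy) + (1 / 2) * vy * Real.exp (vx / vy) ≥
      (1 / 2) * (|vx| + |vy| + |vy * Real.exp (vx / vy)|) ∧
    (1 / 2 ≤ a → a * vy + vy * Real.exp (vx / vy) ≥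
      (1 / 2) * (|vx| + |vy| + |vy * Real.exp (vx / vy)|)) := by
  have he : (0:ℝ) < Real.exp (vx / vy) := Real.exp_pos _
  have hexp : 1 + vx / vy ≤ Real.exp (vx / vy) := by linarith [Real.add_one_le_exp (vx / vy)]
  have hprod : 0 < vy * Real.exp (vx / vy) := mul_pos hy he
  have habs1 : |vx| = vx := abs_of_pos hx
  have habs2 : |vy| = vy := abs_of_pos hy
  have habs3 : |vy * Real.exp (vx / vy)| = vy * Real.exp (vx / vy) := abs_of_pos hprod
  have key : vy * (1 + vx / vy) = vy + vx := by field_simp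
  refine ⟨?_, ?_, ?_, ?_⟩
  · rw [abs_of_pos]
    · ring
    · nlinarith [mul_pos ha hy]
  · nlinarith [mul_le_mul_of_nonneg_left hexp hy.le]
  · rw [habs1, habs2, habs3]; nlinarith [mul_pos ha hy]
  · intro haa
    rw [habs1, habs2, habs3]
    nlinarith [mul_le_mul_of_nonneg_left hexp hy.le, mul_le_mul_of_nonneg_right haa hy.le]
end

section
/- For each k ≥ 1 let w_k = ((ln k)/k, 0, 1) ∈ ℝ³. Then d(w_k, K_exp) ≤ 1/k (witnessed by v_k = ((ln k)/k, 1/k, 1) ∈ K_exp), while the distance from w_k to the face F_{−∞} = {(x,0,z) : x ≤ 0, z ≥ 0} equals (ln k)/k. Hence the ratio d(w_k, F_{−∞}) / d(w_k, K_exp) tends to infinity, so no Lipschitz error bound holds between span F_{−∞} and K_exp near (0,0,1). -/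
def FnegInf : Set (EuclideanSpace ℝ (Fin 3)) := {v | v 0 ≤ 0 ∧ v 1 = 0 ∧ 0 ≤ v 2}

def spanFnegInf : Set (EuclideanSpace ℝ (Fin 3)) := {v | v 1 = 0}

open Real Filter Metric Topology

lemma mem_Kexp_iff_forall_tangent {v : EuclideanSpace ℝ (Fin 3)} :
    v ∈ Kexp ↔ 0 ≤ v 1 ∧ 0 ≤ v 2 ∧ ∀ t : ℝ, exp t * (v 0 + (1 - t) * v 1) ≤ v 2 := by
  constructor
  · rintro (⟨hy, hz⟩ | ⟨hx, hz, hy⟩)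
    · refine ⟨hy.le, (by positivity : 0 < v 1 * exp (v 0 / v 1)).le.trans hz, fun t => ?_⟩
      calc exp t * (v 0 + (1 - t) * v 1) = v 1 * (exp t * (v 0 / v 1 - t + 1)) := by
            field_simp; ring
        _ ≤ v 1 * (exp t * exp (v 0 / v 1 - t)) := by
            gcongr; exact add_one_le_exp _
        _ = v 1 * exp (v 0 / v 1) := by rw [← exp_add, add_sub_cancel]
        _ ≤ v 2 := hz
    · refine ⟨hy.ge, hz, fun t => ?_⟩
      rw [hy, mul_zero, add_zero]
      exact (mul_nonpos_of_nonneg_of_nonpos (exp_pos t).le hx).trans hz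
  · rintro ⟨hy, hz, htan⟩
    rcases hy.lt_or_eq with hy | hy
    · left
      refine ⟨hy, ?_⟩
      have := htan (v 0 / v 1)
      calc v 1 * exp (v 0 / v 1) = exp (v 0 / v 1) * (v 0 + (1 - v 0 / v 1) * v 1) := by
            field_simp; ring
        _ ≤ v 2 := this
    · right
      refine ⟨?_, hz, hy.symm⟩
      by_contra! hx
      have := htan (log ((v 2 + 1) / v 0))
      rw [← hy, mul_zero, add_zero, exp_log (by positivity), div_mul_cancel₀ _ hx.ne'] at this
      linarith

lemma isClosed_Kexp : IsClosed Kexp := by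
  have : Kexp = {v | 0 ≤ v 1} ∩ {v | 0 ≤ v 2} ∩
      ⋂ t : ℝ, {v | exp t * (v 0 + (1 - t) * v 1) ≤ v 2} := by
    ext v; simp [mem_Kexp_iff_forall_tangent, and_assoc]
  rw [this]
  refine ((isClosed_le ?_ ?_).inter (isClosed_le ?_ ?_)).inter
    (isClosed_iInter fun t => isClosed_le ?_ ?_) <;> fun_prop

lemma dist_eq_sqrt_fin_three (x y : EuclideanSpace ℝ (Fin 3)) :
    dist x y = √((x 0 - y 0) ^ 2 + (x 1 - y 1) ^ 2 + (x 2 - y 2) ^ 2) := by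
  simp [EuclideanSpace.dist_eq, Fin.sum_univ_three, Real.dist_eq, sq_abs]

lemma infDist_FnegInf_eq {w : EuclideanSpace ℝ (Fin 3)} (hx : 0 ≤ w 0) (hy : w 1 = 0)
    (hz : 0 ≤ w 2) : infDist w FnegInf = w 0 := by
  have hmem : !₂[0, 0, w 2] ∈ FnegInf := by simp [FnegInf, hz]
  refine le_antisymm ?_ ((le_infDist ⟨_, hmem⟩).2 fun z hzF => ?_)
  · refine (infDist_le_dist_of_mem hmem).trans_eq ?_
    simp [dist_eq_sqrt_fin_three, hy, sqrt_sq hx]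
  · calc w 0 ≤ |w 0 - z 0| := by linarith [le_abs_self (w 0 - z 0), hzF.1]
      _ ≤ dist w z := by simpa [Real.dist_eq] using PiLp.dist_apply_le w z 0

lemma infDist_Kexp_pos {w : EuclideanSpace ℝ (Fin 3)} (hx : 0 < w 0) (hy : w 1 = 0) :
    0 < infDist w Kexp := by
  have hne : Kexp.Nonempty := ⟨0, Or.inr (by simp)⟩
  refine (isClosed_Kexp.notMem_iff_infDist_pos hne).1 ?_
  rintro (⟨h, -⟩ | ⟨h, -⟩) <;> linarith

lemma not_lipschitz_errorBound_of_tendsto {X : Type*} [PseudoMetricSpace X] {A S K : Set X}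
    {p : X} {q : ℕ → X} (hq : Tendsto q atTop (𝓝 p)) (hS : ∀ k, q k ∈ S)
    (hratio : Tendsto (fun k => infDist (q k) A / infDist (q k) K) atTop atTop) :
    ¬∃ κ ε : ℝ, 0 < κ ∧ 0 < ε ∧ ∀ x : X, dist x p ≤ ε →
      infDist x A ≤ κ * max (infDist x S) (infDist x K) := by
  rintro ⟨κ, ε, hκ, hε, hbound⟩
  obtain ⟨k, hk, hkε⟩ :=
    ((hratio.eventually_gt_atTop κ).and (hq.eventually (closedBall_mem_nhds p hε))).exists
  have := hbound (q k) hkε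
  rw [infDist_zero_of_mem (hS k), max_eq_right infDist_nonneg] at this
  exact hk.not_ge (div_le_of_le_mul₀ infDist_nonneg hκ.le this)

theorem no_lipschitz_bound_FnegInf (w v : ℕ → EuclideanSpace ℝ (Fin 3))
    (hw : ∀ k : ℕ, w k 0 = Real.log (k : ℝ) / (k : ℝ) ∧ w k 1 = 0 ∧ w k 2 = 1)
    (hv : ∀ k : ℕ, v k 0 = Real.log (k : ℝ) / (k : ℝ) ∧ v k 1 = 1 / (k : ℝ) ∧ v k 2 = 1)
    (p : EuclideanSpace ℝ (Fin 3)) (hp : p 0 = 0 ∧ p 1 = 0 ∧ p 2 = 1) :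
    (∀ k : ℕ, 1 ≤ k → v k ∈ Kexp ∧ Metric.infDist (w k) Kexp ≤ 1 / (k : ℝ) ∧
      Metric.infDist (w k) FnegInf = Real.log (k : ℝ) / (k : ℝ)) ∧
    Filter.Tendsto (fun k : ℕ => Metric.infDist (w k) FnegInf / Metric.infDist (w k) Kexp)
      Filter.atTop Filter.atTop ∧
    ¬∃ κ ε : ℝ, 0 < κ ∧ 0 < ε ∧ ∀ q : EuclideanSpace ℝ (Fin 3), dist q p ≤ ε →
      Metric.infDist q FnegInf ≤
        κ * max (Metric.infDist q spanFnegInf) (Metric.infDist q Kexp) := by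
  have hF (k : ℕ) : infDist (w k) FnegInf = log k / k := by
    obtain ⟨hx, hy, hz⟩ := hw k
    exact hx ▸ infDist_FnegInf_eq (hx ▸ by positivity) hy (by rw [hz]; exact zero_le_one)
  have hKexp (k : ℕ) (hk : 1 ≤ k) : v k ∈ Kexp ∧ infDist (w k) Kexp ≤ 1 / k := by
    obtain ⟨hx, hy, hz⟩ := hv k
    have hk : (0 : ℝ) < k := by exact_mod_cast hk
    have hmem : v k ∈ Kexp := Or.inl ⟨hy ▸ by positivity, by
      rw [hx, hy, hz, div_div_eq_mul_div, div_mul_cancel₀ _ hk.ne', div_one, exp_log hk,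
        one_div_mul_cancel hk.ne']⟩
    refine ⟨hmem, (infDist_le_dist_of_mem hmem).trans_eq ?_⟩
    simp [dist_eq_sqrt_fin_three, hw k, hx, hy, hz]
  have hratio :
      Tendsto (fun k : ℕ => infDist (w k) FnegInf / infDist (w k) Kexp) atTop atTop := by
    refine tendsto_atTop_mono' _ ?_ (tendsto_log_atTop.comp tendsto_natCast_atTop_atTop)
    filter_upwards [eventually_ge_atTop 2] with k hk
    have hk' : (1 : ℝ) < k := by exact_mod_cast hk
    calc log k = (log k / k) / (1 / k) := by field_simp
      _ ≤ infDist (w k) FnegInf / infDist (w k) Kexp := by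
        have hpos : 0 < log k / k := div_pos (log_pos hk') (by positivity)
        rw [hF]
        gcongr
        · exact infDist_Kexp_pos ((hw k).1 ▸ hpos) (hw k).2.1
        · exact (hKexp k (by omega)).2
  have hwp : Tendsto w atTop (𝓝 p) := by
    have hlim : Tendsto (fun k : ℕ => log k / k) atTop (𝓝 0) :=
      isLittleO_log_id_atTop.tendsto_div_nhds_zero.comp tendsto_natCast_atTop_atTop
    rw [tendsto_iff_dist_tendsto_zero]
    simpa [dist_eq_sqrt_fin_three, hw, hp, sqrt_sq_eq_abs] using hlim.abs
  exact ⟨fun k hk => ⟨(hKexp k hk).1, (hKexp k hk).2, hF k⟩, hratio,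
    not_lipschitz_errorBound_of_tendsto hwp (fun k => (hw k).2.1) hratio⟩
end

section
/- Let K¹ ⊆ E¹ and K² ⊆ E² be closed convex cones, and let F¹ ⊴ K¹ and F² ⊴ K² be faces such that for every bounded set B there exists κ > 0 with d(x, Fⁱ) ≤ κ·g(d(x, Kⁱ)) for all x ∈ (span Fⁱ) ∩ B (i = 1,2), where g: ℝ₊ → ℝ₊ is monotone nondecreasing with g(0) = 0. Then F¹ × F² is a face of K¹ × K² and for every bounded set B ⊆ E¹ × E² there exists κ' > 0 such that d((x₁,x₂), F¹ × F²) ≤ κ'·g(d((x₁,x₂), K¹ × K²)) for all (x₁,x₂) ∈ span(F¹ × F²) ∩ B. -/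
def IsFaceOf {E : Type*} [NormedAddCommGroup E] [InnerProductSpace ℝ E]
    (F K : Set E) : Prop :=
  F ⊆ K ∧ IsClosed F ∧ Convex ℝ F ∧ (∀ (c : ℝ), 0 ≤ c → ∀ x ∈ F, c • x ∈ F) ∧
    ∀ x y, x ∈ K → y ∈ K → x + y ∈ F → x ∈ F ∧ y ∈ F

/-!
Everything is componentwise. A point of the span of `F₁ × F₂` has its components in the spans
of `F₁` and `F₂`, projecting to a component does not increase distances, and in an `L^p` product
with `p ≥ 1` the distance to `F₁ × F₂` is at most the sum of the distances of the components to
`F₁` and `F₂`. Applying the two amenability bounds to the projections of the bounded set and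
using that `g` is monotone gives the bound with `κ' = κ₁ + κ₂`.
-/

open Metric Set WithLp

namespace WithLp

section Span

variable {p : ENNReal} {𝕜 α β : Type*} [Semiring 𝕜] [AddCommGroup α] [AddCommGroup β]
  [Module 𝕜 α] [Module 𝕜 β] {s : Set α} {t : Set β} {q : WithLp p (α × β)}

theorem fst_mem_span_of_mem_span_preimage_prod
    (hq : q ∈ Submodule.span 𝕜 (ofLp ⁻¹' (s ×ˢ t))) : q.fst ∈ Submodule.span 𝕜 s :=
  Submodule.span_mono (by rintro _ ⟨y, hy, rfl⟩; exact hy.1)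
    (Submodule.apply_mem_span_image_of_mem_span (fstₗ p 𝕜 α β) hq)

theorem snd_mem_span_of_mem_span_preimage_prod
    (hq : q ∈ Submodule.span 𝕜 (ofLp ⁻¹' (s ×ˢ t))) : q.snd ∈ Submodule.span 𝕜 t :=
  Submodule.span_mono (by rintro _ ⟨y, hy, rfl⟩; exact hy.2)
    (Submodule.apply_mem_span_image_of_mem_span (sndₗ p 𝕜 α β) hq)

end Span

variable {p : ENNReal} [Fact (1 ≤ p)]

section PseudoMetric

variable {α β : Type*} [PseudoMetricSpace α] [PseudoMetricSpace β] {s : Set α} {t : Set β}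

theorem infDist_fst_le_infDist_preimage_prod
    (hst : (ofLp ⁻¹' (s ×ˢ t) : Set (WithLp p (α × β))).Nonempty) (q : WithLp p (α × β)) :
    infDist q.fst s ≤ infDist q (ofLp ⁻¹' (s ×ˢ t)) :=
  (le_infDist hst).2 fun y hy => (infDist_le_dist_of_mem hy.1).trans (dist_fst_le q y)

theorem infDist_snd_le_infDist_preimage_prod
    (hst : (ofLp ⁻¹' (s ×ˢ t) : Set (WithLp p (α × β))).Nonempty) (q : WithLp p (α × β)) :
    infDist q.snd t ≤ infDist q (ofLp ⁻¹' (s ×ˢ t)) :=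
  (le_infDist hst).2 fun y hy => (infDist_le_dist_of_mem hy.2).trans (dist_snd_le q y)

end PseudoMetric

variable {α β : Type*} [SeminormedAddCommGroup α] [SeminormedAddCommGroup β]

theorem prod_norm_le_add (x : WithLp p (α × β)) : ‖x‖ ≤ ‖x.fst‖ + ‖x.snd‖ :=
  calc ‖x‖ = ‖(idemFst + idemSnd : AddMonoid.End (WithLp p (α × β))) x‖ := by
        rw [idemFst_add_idemSnd]; rfl
    _ ≤ ‖idemFst x‖ + ‖idemSnd x‖ := norm_add_le _ _
    _ = ‖x.fst‖ + ‖x.snd‖ := by rw [idemFst_apply, idemSnd_apply, norm_toLp_fst, norm_toLp_snd]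

theorem prod_dist_le_add (x y : WithLp p (α × β)) :
    dist x y ≤ dist x.fst y.fst + dist x.snd y.snd := by
  simpa only [dist_eq_norm, sub_fst, sub_snd] using prod_norm_le_add (x - y)

theorem infDist_preimage_prod_le (s : Set α) (t : Set β) (q : WithLp p (α × β)) :
    infDist q (ofLp ⁻¹' (s ×ˢ t)) ≤ infDist q.fst s + infDist q.snd t := by
  rcases s.eq_empty_or_nonempty with rfl | hs
  · simpa using infDist_nonneg
  rcases t.eq_empty_or_nonempty with rfl | ht
  · simpa using infDist_nonneg
  refine le_of_forall_pos_lt_add fun ε hε => ?_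
  obtain ⟨y₁, hy₁, hdy₁⟩ :=
    (infDist_lt_iff hs).1 (lt_add_of_pos_right (infDist q.fst s) (half_pos hε))
  obtain ⟨y₂, hy₂, hdy₂⟩ :=
    (infDist_lt_iff ht).1 (lt_add_of_pos_right (infDist q.snd t) (half_pos hε))
  calc infDist q (ofLp ⁻¹' (s ×ˢ t)) ≤ dist q (toLp p (y₁, y₂)) :=
        infDist_le_dist_of_mem (show (y₁, y₂) ∈ s ×ˢ t from ⟨hy₁, hy₂⟩)
    _ ≤ dist q.fst y₁ + dist q.snd y₂ := prod_dist_le_add q _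
    _ < infDist q.fst s + infDist q.snd t + ε := by linarith

end WithLp

def IsGAmenable {E : Type*} [SeminormedAddCommGroup E] [Module ℝ E] (g : ℝ → ℝ)
    (F K : Set E) : Prop :=
  ∀ B : Set E, Bornology.IsBounded B → ∃ κ : ℝ, 0 < κ ∧
    ∀ x ∈ (Submodule.span ℝ F : Set E) ∩ B, infDist x F ≤ κ * g (infDist x K)

theorem IsGAmenable.prod {p : ENNReal} [Fact (1 ≤ p)] {E₁ E₂ : Type*}
    [SeminormedAddCommGroup E₁] [NormedSpace ℝ E₁] [SeminormedAddCommGroup E₂] [NormedSpace ℝ E₂]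
    {g : ℝ → ℝ} {F₁ K₁ : Set E₁} {F₂ K₂ : Set E₂}
    (h₁ : IsGAmenable g F₁ K₁) (h₂ : IsGAmenable g F₂ K₂) (hFK₁ : F₁ ⊆ K₁) (hFK₂ : F₂ ⊆ K₂)
    (hg0 : g 0 = 0) (hg : MonotoneOn g (Ici 0)) :
    IsGAmenable g (ofLp ⁻¹' (F₁ ×ˢ F₂) : Set (WithLp p (E₁ × E₂))) (ofLp ⁻¹' (K₁ ×ˢ K₂)) := by
  intro B hB
  obtain ⟨κ₁, hκ₁, hB₁⟩ := h₁ (WithLp.fst '' B) ((fstL p ℝ E₁ E₂).lipschitz.isBounded_image hB)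
  obtain ⟨κ₂, hκ₂, hB₂⟩ := h₂ (WithLp.snd '' B) ((sndL p ℝ E₁ E₂).lipschitz.isBounded_image hB)
  refine ⟨κ₁ + κ₂, add_pos hκ₁ hκ₂, fun q ⟨hq, hqB⟩ => ?_⟩
  rcases (ofLp ⁻¹' (K₁ ×ˢ K₂) : Set (WithLp p (E₁ × E₂))).eq_empty_or_nonempty with hK | hK
  -- `infDist` to the empty set is the junk value `0`, so both sides vanish here.
  · have hF : (ofLp ⁻¹' (F₁ ×ˢ F₂) : Set (WithLp p (E₁ × E₂))) = ∅ :=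
      subset_empty_iff.1 (hK ▸ preimage_mono (prod_mono hFK₁ hFK₂))
    simp [hF, hK, hg0]
  set dK := infDist q (ofLp ⁻¹' (K₁ ×ˢ K₂))
  have hg₁ : g (infDist q.fst K₁) ≤ g dK :=
    hg infDist_nonneg infDist_nonneg (infDist_fst_le_infDist_preimage_prod hK q)
  have hg₂ : g (infDist q.snd K₂) ≤ g dK :=
    hg infDist_nonneg infDist_nonneg (infDist_snd_le_infDist_preimage_prod hK q)
  calc infDist q (ofLp ⁻¹' (F₁ ×ˢ F₂)) ≤ infDist q.fst F₁ + infDist q.snd F₂ :=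
        infDist_preimage_prod_le F₁ F₂ q
    _ ≤ κ₁ * g (infDist q.fst K₁) + κ₂ * g (infDist q.snd K₂) :=
        add_le_add (hB₁ _ ⟨fst_mem_span_of_mem_span_preimage_prod hq, mem_image_of_mem _ hqB⟩)
          (hB₂ _ ⟨snd_mem_span_of_mem_span_preimage_prod hq, mem_image_of_mem _ hqB⟩)
    _ ≤ κ₁ * g dK + κ₂ * g dK := by gcongr
    _ = (κ₁ + κ₂) * g dK := by ring

theorem IsFaceOf.prod {E₁ E₂ : Type*} [NormedAddCommGroup E₁] [InnerProductSpace ℝ E₁]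
    [NormedAddCommGroup E₂] [InnerProductSpace ℝ E₂] {F₁ K₁ : Set E₁} {F₂ K₂ : Set E₂}
    (h₁ : IsFaceOf F₁ K₁) (h₂ : IsFaceOf F₂ K₂) :
    IsFaceOf (ofLp ⁻¹' (F₁ ×ˢ F₂) : Set (WithLp 2 (E₁ × E₂))) (ofLp ⁻¹' (K₁ ×ˢ K₂)) := by
  obtain ⟨hFK₁, hcl₁, hcv₁, hcone₁, hface₁⟩ := h₁
  obtain ⟨hFK₂, hcl₂, hcv₂, hcone₂, hface₂⟩ := h₂
  refine ⟨preimage_mono (prod_mono hFK₁ hFK₂), (hcl₁.prod hcl₂).preimage (prod_continuous_ofLp ..),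
    (hcv₁.prod hcv₂).linear_preimage (WithLp.linearEquiv 2 ℝ (E₁ × E₂)).toLinearMap,
    fun c hc x hx => ⟨hcone₁ c hc _ hx.1, hcone₂ c hc _ hx.2⟩, fun x y hx hy hxy => ?_⟩
  obtain ⟨hx₁, hy₁⟩ := hface₁ _ _ hx.1 hy.1 hxy.1
  obtain ⟨hx₂, hy₂⟩ := hface₂ _ _ hx.2 hy.2 hxy.2
  exact ⟨⟨hx₁, hx₂⟩, ⟨hy₁, hy₂⟩⟩

theorem g_amenable_product_general
    {E₁ E₂ : Type*} [NormedAddCommGroup E₁] [InnerProductSpace ℝ E₁]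
    [NormedAddCommGroup E₂] [InnerProductSpace ℝ E₂]
    (K₁ F₁ : Set E₁) (K₂ F₂ : Set E₂)
    (hF₁ : IsFaceOf F₁ K₁) (hF₂ : IsFaceOf F₂ K₂)
    (g : ℝ → ℝ) (hg0 : g 0 = 0) (hgmono : MonotoneOn g (Set.Ici 0))
    (ham₁ : ∀ B : Set E₁, Bornology.IsBounded B → ∃ κ : ℝ, 0 < κ ∧
      ∀ x ∈ (Submodule.span ℝ F₁ : Set E₁) ∩ B,
        Metric.infDist x F₁ ≤ κ * g (Metric.infDist x K₁))
    (ham₂ : ∀ B : Set E₂, Bornology.IsBounded B → ∃ κ : ℝ, 0 < κ ∧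
      ∀ x ∈ (Submodule.span ℝ F₂ : Set E₂) ∩ B,
        Metric.infDist x F₂ ≤ κ * g (Metric.infDist x K₂)) :
    IsFaceOf
      {q : WithLp 2 (E₁ × E₂) |
        ((WithLp.equiv 2 (E₁ × E₂)) q).1 ∈ F₁ ∧ ((WithLp.equiv 2 (E₁ × E₂)) q).2 ∈ F₂}
      {q : WithLp 2 (E₁ × E₂) |
        ((WithLp.equiv 2 (E₁ × E₂)) q).1 ∈ K₁ ∧ ((WithLp.equiv 2 (E₁ × E₂)) q).2 ∈ K₂} ∧
    ∀ B : Set (WithLp 2 (E₁ × E₂)), Bornology.IsBounded B → ∃ κ' : ℝ, 0 < κ' ∧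
      ∀ q ∈ (Submodule.span ℝ
          {q : WithLp 2 (E₁ × E₂) |
            ((WithLp.equiv 2 (E₁ × E₂)) q).1 ∈ F₁ ∧
              ((WithLp.equiv 2 (E₁ × E₂)) q).2 ∈ F₂} : Set (WithLp 2 (E₁ × E₂))) ∩ B,
        Metric.infDist q
            {q : WithLp 2 (E₁ × E₂) |
              ((WithLp.equiv 2 (E₁ × E₂)) q).1 ∈ F₁ ∧
                ((WithLp.equiv 2 (E₁ × E₂)) q).2 ∈ F₂} ≤
          κ' * g (Metric.infDist q
            {q : WithLp 2 (E₁ × E₂) |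
              ((WithLp.equiv 2 (E₁ × E₂)) q).1 ∈ K₁ ∧
                ((WithLp.equiv 2 (E₁ × E₂)) q).2 ∈ K₂}) :=
  ⟨hF₁.prod hF₂, IsGAmenable.prod ham₁ ham₂ hF₁.1 hF₂.1 hg0 hgmono⟩

theorem g_amenable_product
    {E₁ E₂ : Type*} [NormedAddCommGroup E₁] [InnerProductSpace ℝ E₁] [FiniteDimensional ℝ E₁]
    [NormedAddCommGroup E₂] [InnerProductSpace ℝ E₂] [FiniteDimensional ℝ E₂]
    (K₁ F₁ : Set E₁) (K₂ F₂ : Set E₂)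
    (hK₁cl : IsClosed K₁) (hK₁cv : Convex ℝ K₁)
    (hK₁cone : ∀ (c : ℝ), 0 ≤ c → ∀ x ∈ K₁, c • x ∈ K₁)
    (hK₂cl : IsClosed K₂) (hK₂cv : Convex ℝ K₂)
    (hK₂cone : ∀ (c : ℝ), 0 ≤ c → ∀ x ∈ K₂, c • x ∈ K₂)
    (hF₁ : IsFaceOf F₁ K₁) (hF₂ : IsFaceOf F₂ K₂)
    (g : ℝ → ℝ) (hg0 : g 0 = 0) (hgmono : MonotoneOn g (Set.Ici 0))
    (hgnn : ∀ t : ℝ, 0 ≤ t → 0 ≤ g t)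
    (ham₁ : ∀ B : Set E₁, Bornology.IsBounded B → ∃ κ : ℝ, 0 < κ ∧
      ∀ x ∈ (Submodule.span ℝ F₁ : Set E₁) ∩ B,
        Metric.infDist x F₁ ≤ κ * g (Metric.infDist x K₁))
    (ham₂ : ∀ B : Set E₂, Bornology.IsBounded B → ∃ κ : ℝ, 0 < κ ∧
      ∀ x ∈ (Submodule.span ℝ F₂ : Set E₂) ∩ B,
        Metric.infDist x F₂ ≤ κ * g (Metric.infDist x K₂)) :
    IsFaceOf
      {q : WithLp 2 (E₁ × E₂) |
        ((WithLp.equiv 2 (E₁ × E₂)) q).1 ∈ F₁ ∧ ((WithLp.equiv 2 (E₁ × E₂)) q).2 ∈ F₂}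
      {q : WithLp 2 (E₁ × E₂) |
        ((WithLp.equiv 2 (E₁ × E₂)) q).1 ∈ K₁ ∧ ((WithLp.equiv 2 (E₁ × E₂)) q).2 ∈ K₂} ∧
    ∀ B : Set (WithLp 2 (E₁ × E₂)), Bornology.IsBounded B → ∃ κ' : ℝ, 0 < κ' ∧
      ∀ q ∈ (Submodule.span ℝ
          {q : WithLp 2 (E₁ × E₂) |
            ((WithLp.equiv 2 (E₁ × E₂)) q).1 ∈ F₁ ∧
              ((WithLp.equiv 2 (E₁ × E₂)) q).2 ∈ F₂} : Set (WithLp 2 (E₁ × E₂))) ∩ B,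
        Metric.infDist q
            {q : WithLp 2 (E₁ × E₂) |
              ((WithLp.equiv 2 (E₁ × E₂)) q).1 ∈ F₁ ∧
                ((WithLp.equiv 2 (E₁ × E₂)) q).2 ∈ F₂} ≤
          κ' * g (Metric.infDist q
            {q : WithLp 2 (E₁ × E₂) |
              ((WithLp.equiv 2 (E₁ × E₂)) q).1 ∈ K₁ ∧
                ((WithLp.equiv 2 (E₁ × E₂)) q).2 ∈ K₂}) :=
  g_amenable_product_general K₁ F₁ K₂ F₂ hF₁ hF₂ g hg0 hgmono ham₁ ham₂
end
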